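/- arXiv:1902.05017 — 8 statements merged into one kernel-verified Lean document; each statement's English description precedes it below -/
import Mathlib

section
/- There is a universal constant c > 0 such that for every domain X, every concept class H of functions X → {0,1} whose VC dimension is finite and equal to d, and every integer k ≥ 1, the VC dimension of the class H^{∨k} of all disjunctions (pointwise OR) of at most k concepts from H is at most c · k · log₂(2k) · d. -/
/-- A concept class `C` shatters a finite set `A` if every Boolean labeling of `A`
is realized by some concept in `C`. -/
def Shatters {X : Type*} (C : Set (X → Bool)) (A : Finset X) : Prop :=
  ∀ f : X → Bool, ∃ c ∈ C, ∀ x ∈ A, c x = f x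

/-- The VC dimension of a concept class: the supremum of sizes of shattered finite sets. -/
noncomputable def vcDim {X : Type*} (C : Set (X → Bool)) : ℕ∞ :=
  ⨆ A ∈ {A : Finset X | Shatters C A}, (A.card : ℕ∞)

/-- `H^{∨k}`: all pointwise disjunctions of at most `k` (and at least one) concepts from `H`. -/
def disjK {X : Type*} (H : Set (X → Bool)) (k : ℕ) : Set (X → Bool) :=
  {g | ∃ l : List (X → Bool), l ≠ [] ∧ l.length ≤ k ∧ (∀ h ∈ l, h ∈ H) ∧
    g = fun x => l.any fun h => h x}

/-!
If `A` is shattered by `H^{∨k}`, every subset of `A` is a union of at most `k` traces of `H`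
on `A`, so `2 ^ |A| ≤ N ^ k` where `N` is the number of traces. The traces form a set family of
VC dimension at most `d`, so by Sauer–Shelah `N ≤ ∑_{i ≤ d} (|A| choose i) ≤ (e|A|/d)^d`.
Hence `|A| log 2 ≤ d k log (e|A|/d)`, and `log t ≤ t / e` at `t = |A| / (d k)` turns this into
`|A| (log 2 - 1/e) ≤ d k (1 + log k)`.
-/

open Finset Real

section Trace

variable {X : Type*}

def traceOn (A : Finset X) (c : X → Bool) : Finset A := univ.filter fun x => c x

noncomputable def traceFamily (A : Finset X) (C : Set (X → Bool)) : Finset (Finset A) :=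
  (Set.toFinite (traceOn A '' C)).toFinset

variable {A : Finset X} {C : Set (X → Bool)}

@[simp] lemma mem_traceOn {c : X → Bool} {x : A} : x ∈ traceOn A c ↔ c x = true := by
  simp [traceOn]

@[simp] lemma mem_traceFamily {s : Finset A} :
    s ∈ traceFamily A C ↔ ∃ c ∈ C, traceOn A c = s := by
  simp [traceFamily]

lemma Shatters.card_le_vcDim (h : Shatters C A) : (#A : ℕ∞) ≤ vcDim C :=
  le_iSup₂ (f := fun A (_ : A ∈ {A : Finset X | Shatters C A}) => (#A : ℕ∞)) A h

lemma Shatters.exists_traceOn_eq (h : Shatters C A) (t : Finset A) :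
    ∃ c ∈ C, traceOn A c = t := by
  classical
  obtain ⟨c, hc, hct⟩ := h fun x => decide (∃ hx : x ∈ A, ⟨x, hx⟩ ∈ t)
  exact ⟨c, hc, Finset.ext fun x => by simp [hct x x.2]⟩

lemma shatters_map_of_shatters_traceFamily [DecidableEq X] {s : Finset A}
    (h : (traceFamily A C).Shatters s) :
    Shatters C (s.map (Function.Embedding.subtype _)) := by
  intro f
  obtain ⟨u, hu, hsu⟩ := h (s.filter_subset fun x : A => f x)
  obtain ⟨c, hc, rfl⟩ := mem_traceFamily.1 hu
  refine ⟨c, hc, ?_⟩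
  simp only [mem_map, Function.Embedding.coe_subtype, forall_exists_index, and_imp]
  rintro _ x hx rfl
  have := congrArg (x ∈ ·) hsu
  simp only [mem_inter, mem_filter, mem_traceOn, hx, true_and, eq_iff_iff] at this
  exact Bool.eq_iff_iff.2 this

lemma vcDim_traceFamily_le [DecidableEq X] {d : ℕ} (hC : vcDim C ≤ d) :
    (traceFamily A C).vcDim ≤ d :=
  Finset.sup_le fun s hs => by
    have := (shatters_map_of_shatters_traceFamily (mem_shatterer.1 hs)).card_le_vcDim
    rw [card_map] at this
    exact_mod_cast this.trans hC

lemma card_traceFamily_le_sum_choose [DecidableEq X] {d : ℕ} (hC : vcDim C ≤ d) :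
    #(traceFamily A C) ≤ ∑ i ∈ Iic d, (#A).choose i :=
  calc #(traceFamily A C) ≤ #(traceFamily A C).shatterer := card_le_card_shatterer _
    _ ≤ ∑ i ∈ Iic (traceFamily A C).vcDim, (Fintype.card A).choose i :=
      card_shatterer_le_sum_vcDim
    _ ≤ ∑ i ∈ Iic d, (#A).choose i := by
      rw [Fintype.card_coe]
      exact sum_le_sum_of_subset (Iic_subset_Iic.2 (vcDim_traceFamily_le hC))

end Trace

section Disjunction

variable {X : Type*} {H : Set (X → Bool)} {k : ℕ}

lemma List.exists_fin_range_eq {α : Type*} {l : List α} (hl : l ≠ []) (hk : l.length ≤ k) :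
    ∃ f : Fin k → α, Set.range f = {a | a ∈ l} := by
  refine ⟨fun i => if h : (i : ℕ) < l.length then l[i] else l.head hl,
    Set.ext fun a => ⟨?_, fun ha => ?_⟩⟩
  · rintro ⟨i, rfl⟩
    dsimp only [Set.mem_ofPred_eq]
    split
    exacts [List.getElem_mem _, List.head_mem _]
  · obtain ⟨j, hj, rfl⟩ := List.getElem_of_mem ha
    exact ⟨⟨j, hj.trans_le hk⟩, dif_pos hj⟩

lemma exists_fin_of_mem_disjK {g : X → Bool} (hg : g ∈ disjK H k) :
    ∃ f : Fin k → X → Bool, (∀ i, f i ∈ H) ∧ ∀ x, g x = true ↔ ∃ i, f i x = true := by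
  obtain ⟨l, hne, hlen, hH, rfl⟩ := hg
  obtain ⟨f, hf⟩ := List.exists_fin_range_eq hne hlen
  have hmem : ∀ h, h ∈ l ↔ ∃ i, f i = h := fun h => by rw [← Set.mem_range, hf]; rfl
  refine ⟨f, fun i => hH _ ((hmem _).2 ⟨i, rfl⟩), fun x => ?_⟩
  simp only [List.any_eq_true, hmem]
  exact exists_exists_eq_and

lemma exists_traceOn_eq_sup_of_mem_disjK [DecidableEq X] {g : X → Bool} (hg : g ∈ disjK H k)
    (A : Finset X) :
    ∃ v : Fin k → Finset A, (∀ i, v i ∈ traceFamily A H) ∧ traceOn A g = univ.sup v := by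
  obtain ⟨f, hfH, hg⟩ := exists_fin_of_mem_disjK hg
  exact ⟨fun i => traceOn A (f i), fun i => mem_traceFamily.2 ⟨f i, hfH i, rfl⟩,
    Finset.ext fun x => by simp [hg]⟩

lemma two_pow_card_le_card_traceFamily_pow {A : Finset X} (hA : Shatters (disjK H k) A) :
    2 ^ #A ≤ #(traceFamily A H) ^ k := by
  classical
  have hsub : (univ : Finset (Finset A)) ⊆
      (Fintype.piFinset fun _ : Fin k => traceFamily A H).image fun v => univ.sup v := by
    intro t _
    obtain ⟨g, hg, rfl⟩ := hA.exists_traceOn_eq t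
    obtain ⟨v, hv, hgv⟩ := exists_traceOn_eq_sup_of_mem_disjK hg A
    exact mem_image.2 ⟨v, Fintype.mem_piFinset.2 hv, hgv.symm⟩
  calc 2 ^ #A = #(univ : Finset (Finset A)) := by simp
    _ ≤ #(Fintype.piFinset fun _ : Fin k => traceFamily A H) :=
      (card_le_card hsub).trans card_image_le
    _ = #(traceFamily A H) ^ k := Fintype.card_piFinset_const _ _

end Disjunction

section Estimates

lemma pow_mul_sum_choose_le_one_add_pow {x : ℝ} (hx0 : 0 ≤ x) (hx1 : x ≤ 1) {d m : ℕ}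
    (hdm : d ≤ m) : x ^ d * ∑ i ∈ Iic d, (m.choose i : ℝ) ≤ (1 + x) ^ m :=
  calc x ^ d * ∑ i ∈ Iic d, (m.choose i : ℝ) ≤ ∑ i ∈ Iic d, x ^ i * m.choose i := by
        rw [mul_sum]
        exact sum_le_sum fun i hi =>
          mul_le_mul_of_nonneg_right (pow_le_pow_of_le_one hx0 hx1 (mem_Iic.1 hi)) (by positivity)
    _ ≤ ∑ i ∈ range (m + 1), x ^ i * m.choose i :=
        sum_le_sum_of_subset_of_nonneg
          (fun i hi => by simp only [mem_Iic, mem_range] at hi ⊢; omega) fun i _ _ => by positivity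
    _ = (1 + x) ^ m := by rw [add_comm 1 x, add_pow]; simp only [one_pow, mul_one]

lemma sum_choose_le_exp_mul_div_pow {d m : ℕ} (hdm : d ≤ m) :
    ∑ i ∈ Iic d, (m.choose i : ℝ) ≤ (exp 1 * m / d) ^ d := by
  rcases Nat.eq_zero_or_pos d with rfl | hd
  · simp [show Iic 0 = {0} from rfl]
  have hm : (0 : ℝ) < m := by exact_mod_cast hd.trans_le hdm
  set x : ℝ := d / m
  have hx0 : 0 < x := by positivity
  have hxm : x * m = d := div_mul_cancel₀ _ hm.ne'
  have hbound : x ^ d * ∑ i ∈ Iic d, (m.choose i : ℝ) ≤ exp 1 ^ d :=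
    calc x ^ d * ∑ i ∈ Iic d, (m.choose i : ℝ) ≤ (1 + x) ^ m :=
          pow_mul_sum_choose_le_one_add_pow hx0.le
            ((div_le_one hm).2 (by exact_mod_cast hdm)) hdm
      _ ≤ exp x ^ m := by gcongr; linarith [add_one_le_exp x]
      _ = exp 1 ^ d := by rw [← exp_nat_mul, ← exp_nat_mul, mul_comm, hxm, mul_one]
  calc ∑ i ∈ Iic d, (m.choose i : ℝ) ≤ exp 1 ^ d / x ^ d := by
        rw [le_div_iff₀ (by positivity), mul_comm]; exact hbound
    _ = (exp 1 * m / d) ^ d := by rw [← div_pow, ← hxm]; field_simp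

lemma le_mul_logb_of_mul_log_two_le {m d k : ℝ} (hm : 0 < m) (hd : 0 ≤ d) (hk : 1 ≤ k)
    (h : m * log 2 ≤ k * (d * log (exp 1 * m / d))) : m ≤ 4 * k * logb 2 (2 * k) * d := by
  rcases hd.eq_or_lt with rfl | hd
  · nlinarith [log_pos one_lt_two]
  have hk0 : 0 < k := by linarith
  set y := m / (d * k)
  have hy : 0 < y := by positivity
  have hlog_split : log (exp 1 * m / d) = 1 + log y + log k := by
    have : exp 1 * m / d = exp 1 * (y * k) := by simp only [y]; field_simp
    rw [this, log_mul (exp_pos 1).ne' (by positivity), log_exp, log_mul hy.ne' hk0.ne']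
    ring
  have hlog_y : log y ≤ y / exp 1 := by
    have := log_le_sub_one_of_pos (div_pos hy (exp_pos 1))
    rw [log_div hy.ne' (exp_pos 1).ne', log_exp] at this
    linarith
  have hdky : d * k * (y / exp 1) = m / exp 1 := by simp only [y]; field_simp
  -- the constant 4 comes from `log 2 - 1 / e > 0.6931 - 0.37 > 1 / 4`
  have hlog_two_lt : 0.6931 < log 2 := by linarith [log_two_gt_d9]
  have hm_div_exp : m / exp 1 ≤ m * 0.37 := by
    rw [div_le_iff₀ (exp_pos 1)]; nlinarith [exp_one_gt_d9]
  have hlogb : 1 + log k ≤ logb 2 (2 * k) := by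
    rw [logb, log_mul two_ne_zero hk0.ne', le_div_iff₀ (log_pos one_lt_two)]
    nlinarith [log_nonneg hk, log_two_lt_d9]
  have hmain : m ≤ 4 * (d * k * (1 + log k)) := by
    have : m * log 2 ≤ d * k * (1 + y / exp 1 + log k) := by
      calc m * log 2 ≤ k * (d * log (exp 1 * m / d)) := h
        _ = d * k * (1 + log y + log k) := by rw [hlog_split]; ring
        _ ≤ d * k * (1 + y / exp 1 + log k) := by gcongr
    nlinarith
  calc m ≤ 4 * (d * k * (1 + log k)) := hmain
    _ ≤ 4 * (d * k * logb 2 (2 * k)) := by gcongr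
    _ = 4 * k * logb 2 (2 * k) * d := by ring

lemma one_le_mul_logb_two_mul {k : ℝ} (hk : 1 ≤ k) : 1 ≤ k * logb 2 (2 * k) := by
  have : 1 ≤ logb 2 (2 * k) := by
    rw [le_logb_iff_rpow_le one_lt_two (by positivity), rpow_one]; linarith
  nlinarith

end Estimates

/-- There is a universal constant `c > 0` such that for every domain `X`, every concept
class `H` with finite VC dimension `d`, and every `k ≥ 1`, the VC dimension of `H^{∨k}`
is at most `c · k · log₂(2k) · d`. -/
theorem stmt0 :
    ∃ c : ℝ, 0 < c ∧
      ∀ (X : Type) (H : Set (X → Bool)) (d k : ℕ), 1 ≤ k →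
        vcDim H = (d : ℕ∞) →
        ∀ A : Finset X, Shatters (disjK H k) A →
          (A.card : ℝ) ≤ c * k * Real.logb 2 (2 * k) * d := by
  refine ⟨4, by norm_num, fun X H d k hk hH A hA => ?_⟩
  classical
  have hkR : (1 : ℝ) ≤ k := by exact_mod_cast hk
  rcases le_or_gt #A d with hAd | hdA
  · have hAd : (#A : ℝ) ≤ d := by exact_mod_cast hAd
    nlinarith [one_le_mul_logb_two_mul hkR]
  have hcount : (2 : ℝ) ^ #A ≤ ((exp 1 * #A / d) ^ d) ^ k :=
    calc (2 : ℝ) ^ #A ≤ (∑ i ∈ Iic d, ((#A).choose i : ℝ)) ^ k := by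
          exact_mod_cast (two_pow_card_le_card_traceFamily_pow hA).trans
            (Nat.pow_le_pow_left (card_traceFamily_le_sum_choose hH.le) k)
      _ ≤ ((exp 1 * #A / d) ^ d) ^ k :=
          pow_le_pow_left₀ (by positivity) (sum_choose_le_exp_mul_div_pow hdA.le) k
  have hA0 : (0 : ℝ) < #A := by exact_mod_cast d.zero_le.trans_lt hdA
  refine le_mul_logb_of_mul_log_two_le hA0 d.cast_nonneg hkR ?_
  simpa only [log_pow] using log_le_log (by positivity) hcount
end

section
/- Let s ≥ 0, ε > 0, and set b = s/ε. For all real numbers μ, μ' with |μ − μ'| ≤ s and every Lebesgue-measurable set T ⊆ ℝ, we have ∫_T f_b(x − μ) dx ≤ e^ε · ∫_T f_b(x − μ') dx, where f_b is the Laplace density with scale b. (This is the privacy guarantee of the Laplace mechanism for a sensitivity-s statistic.) -/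
open MeasureTheory

/-- The Laplace density with scale `b`. -/
noncomputable def lapDensity (b x : ℝ) : ℝ := 1 / (2 * b) * Real.exp (-|x| / b)

lemma integrable_exp_neg_abs_div {b : ℝ} (hb : 0 < b) :
    Integrable (fun x : ℝ => Real.exp (-|x| / b)) := by
  have hIoi : IntegrableOn (fun x : ℝ => Real.exp (-|x| / b)) (Set.Ioi 0) := by
    refine (exp_neg_integrableOn_Ioi 0 (inv_pos.2 hb)).congr_fun ?_ measurableSet_Ioi
    intro x hx
    dsimp only
    rw [abs_of_pos hx]
    ring_nf
  rw [← integrableOn_univ, ← @Set.Iio_union_Ici _ _ (0 : ℝ), integrableOn_union,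
    integrableOn_Ici_iff_integrableOn_Ioi]
  refine ⟨?_, hIoi⟩
  rw [← (Measure.measurePreserving_neg (volume : Measure ℝ)).integrableOn_comp_preimage
      (Homeomorph.neg ℝ).measurableEmbedding]
  simpa [Function.comp_def, abs_neg] using hIoi

lemma integrable_lapDensity {b : ℝ} (hb : 0 < b) (c : ℝ) :
    Integrable (fun x : ℝ => lapDensity b (x - c)) := by
  unfold lapDensity
  exact (((integrable_exp_neg_abs_div hb).comp_sub_right c).const_mul _)

/-- Privacy of the Laplace mechanism: for a sensitivity-`s` statistic (`|μ − μ'| ≤ s`),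
adding Laplace noise of scale `b = s/ε` gives, for every measurable `T ⊆ ℝ`,
`∫_T f_b(x − μ) dx ≤ e^ε · ∫_T f_b(x − μ') dx`. -/
theorem stmt3 (s ε : ℝ) (hs : 0 ≤ s) (hε : 0 < ε) (b : ℝ) (hb : b = s / ε)
    (μ μ' : ℝ) (hμ : |μ - μ'| ≤ s) (T : Set ℝ) (hT : MeasurableSet T) :
    ∫ x in T, lapDensity b (x - μ) ≤ Real.exp ε * ∫ x in T, lapDensity b (x - μ') := by
  rcases eq_or_lt_of_le hs with hs0 | hs0
  · -- s = 0, hence b = 0, density is identically 0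
    have hb0 : b = 0 := by rw [hb, ← hs0]; simp
    simp [lapDensity, hb0]
  · have hbpos : 0 < b := by rw [hb]; positivity
    have key : ∀ x : ℝ, lapDensity b (x - μ) ≤ Real.exp ε * lapDensity b (x - μ') := by
      intro x
      unfold lapDensity
      rw [mul_comm (Real.exp ε), mul_assoc]
      refine mul_le_mul_of_nonneg_left ?_ (by positivity)
      rw [← Real.exp_add]
      refine Real.exp_le_exp.2 ?_
      have h1 : |x - μ| ≥ |x - μ'| - s := by
        have := abs_sub_abs_le_abs_sub (x - μ') (x - μ)
        have h2 : |x - μ' - (x - μ)| = |μ - μ'| := by congr 1; ring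
        linarith [h2 ▸ this, hμ]
      have hsb : s / b = ε := by
        rw [hb]; field_simp
      rw [div_add' _ _ _ hbpos.ne', ← hsb, div_le_div_iff_of_pos_right hbpos]
      have : s / b * b = s := div_mul_cancel₀ s hbpos.ne'
      rw [this]
      linarith
    have hint' : Integrable (fun x : ℝ => Real.exp ε * lapDensity b (x - μ')) :=
      (integrable_lapDensity hbpos μ').const_mul _
    calc ∫ x in T, lapDensity b (x - μ)
        ≤ ∫ x in T, Real.exp ε * lapDensity b (x - μ') := by
          refine setIntegral_mono ((integrable_lapDensity hbpos μ).integrableOn)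
            (hint'.integrableOn) key
      _ = Real.exp ε * ∫ x in T, lapDensity b (x - μ') := by
          rw [integral_const_mul]
end

section
/- Let H be a finite nonempty set, ε > 0, and let q, q' : H → ℝ satisfy |q(h) − q'(h)| ≤ 1 for every h ∈ H. Define probability mass functions p(h) = exp(ε·q(h)/2) / Σ_{f∈H} exp(ε·q(f)/2) and p'(h) = exp(ε·q'(h)/2) / Σ_{f∈H} exp(ε·q'(f)/2). Then for every h ∈ H, p(h) ≤ e^ε · p'(h); consequently, for every subset T ⊆ H, Σ_{h∈T} p(h) ≤ e^ε · Σ_{h∈T} p'(h). (This is ε-differential privacy of the exponential mechanism with a sensitivity-1 quality function.) -/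
/-- Privacy of the exponential mechanism: for a sensitivity-1 quality function
(abstracted as `|q h − q' h| ≤ 1` for all `h`, where `q, q'` are the qualities on two
neighboring databases), the output distributions `p, p'` (with `p(h) ∝ exp(ε q(h)/2)`)
satisfy `p(h) ≤ e^ε p'(h)` pointwise, hence `p(T) ≤ e^ε p'(T)` for every `T ⊆ H`. -/
theorem stmt5 {H : Type*} [Fintype H] [Nonempty H] (ε : ℝ) (hε : 0 < ε)
    (q q' : H → ℝ) (hsens : ∀ h, |q h - q' h| ≤ 1) :
    (∀ h : H,
      Real.exp (ε * q h / 2) / (∑ f, Real.exp (ε * q f / 2)) ≤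
        Real.exp ε * (Real.exp (ε * q' h / 2) / (∑ f, Real.exp (ε * q' f / 2)))) ∧
    (∀ T : Finset H,
      (∑ h ∈ T, Real.exp (ε * q h / 2) / (∑ f, Real.exp (ε * q f / 2))) ≤
        Real.exp ε * ∑ h ∈ T, Real.exp (ε * q' h / 2) / (∑ f, Real.exp (ε * q' f / 2))) := by
  have hSpos : (0:ℝ) < ∑ f, Real.exp (ε * q f / 2) :=
    Finset.sum_pos (fun f _ => Real.exp_pos _) Finset.univ_nonempty
  have hS'pos : (0:ℝ) < ∑ f, Real.exp (ε * q' f / 2) :=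
    Finset.sum_pos (fun f _ => Real.exp_pos _) Finset.univ_nonempty
  have hnum : ∀ h, Real.exp (ε * q h / 2) ≤ Real.exp (ε / 2) * Real.exp (ε * q' h / 2) := by
    intro h
    rw [← Real.exp_add]
    apply Real.exp_le_exp.2
    have := (abs_le.1 (hsens h)).2
    nlinarith
  have hden : (∑ f, Real.exp (ε * q' f / 2)) ≤ Real.exp (ε / 2) * ∑ f, Real.exp (ε * q f / 2) := by
    rw [Finset.mul_sum]
    apply Finset.sum_le_sum
    intro f _
    rw [← Real.exp_add]
    apply Real.exp_le_exp.2
    have := (abs_le.1 (hsens f)).1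
    nlinarith
  have key : ∀ h : H,
      Real.exp (ε * q h / 2) / (∑ f, Real.exp (ε * q f / 2)) ≤
        Real.exp ε * (Real.exp (ε * q' h / 2) / (∑ f, Real.exp (ε * q' f / 2))) := by
    intro h
    rw [mul_div_assoc', div_le_div_iff₀ hSpos hS'pos]
    have h1 : Real.exp ε = Real.exp (ε/2) * Real.exp (ε/2) := by
      rw [← Real.exp_add]; ring_nf
    calc Real.exp (ε * q h / 2) * ∑ f, Real.exp (ε * q' f / 2)
        ≤ (Real.exp (ε / 2) * Real.exp (ε * q' h / 2)) *
            (Real.exp (ε / 2) * ∑ f, Real.exp (ε * q f / 2)) := by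
          apply mul_le_mul (hnum h) hden (le_of_lt hS'pos)
          positivity
      _ = Real.exp ε * Real.exp (ε * q' h / 2) * ∑ f, Real.exp (ε * q f / 2) := by
          rw [h1]; ring
  refine ⟨key, fun T => ?_⟩
  rw [Finset.mul_sum]
  exact Finset.sum_le_sum fun h _ => key h
end

section
/- Let H be a finite nonempty set, ε > 0, λ > 0, and q : H → ℝ. Let p be the probability mass function on H with p(h) proportional to exp(ε·q(h)/2). Then the probability under p of the set {h ∈ H : q(h) ≤ max_{f∈H} q(f) − λ} is at most |H| · exp(−ε·λ/2). -/
/-- Utility of the exponential mechanism: the probability of outputting a solution whose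
quality is at least `λ` below the maximum is at most `|H| · exp(−ελ/2)`. -/
theorem stmt6 {H : Type*} [Fintype H] [Nonempty H] (ε lam : ℝ) (hε : 0 < ε) (hlam : 0 < lam)
    (q : H → ℝ) :
    (∑ h ∈ Finset.univ.filter fun h =>
        q h ≤ Finset.univ.sup' Finset.univ_nonempty q - lam,
      Real.exp (ε * q h / 2)) / (∑ f, Real.exp (ε * q f / 2)) ≤
      (Fintype.card H : ℝ) * Real.exp (-(ε * lam) / 2) := by
  set M := Finset.univ.sup' Finset.univ_nonempty q with hM
  have hDpos : 0 < ∑ f, Real.exp (ε * q f / 2) :=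
    Finset.sum_pos (fun f _ => Real.exp_pos _) Finset.univ_nonempty
  rw [div_le_iff₀ hDpos]
  -- denominator lower bound: exp(εM/2) ≤ D
  obtain ⟨h0, _, hh0⟩ := Finset.exists_mem_eq_sup' Finset.univ_nonempty q
  have hD : Real.exp (ε * M / 2) ≤ ∑ f, Real.exp (ε * q f / 2) := by
    rw [hM, hh0]
    exact Finset.single_le_sum (f := fun f => Real.exp (ε * q f / 2)) (fun f _ => (Real.exp_pos _).le) (Finset.mem_univ h0)
  -- numerator bound
  have hnum : (∑ h ∈ Finset.univ.filter fun h => q h ≤ M - lam,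
      Real.exp (ε * q h / 2)) ≤ (Fintype.card H : ℝ) * Real.exp (ε * (M - lam) / 2) := by
    calc (∑ h ∈ Finset.univ.filter fun h => q h ≤ M - lam, Real.exp (ε * q h / 2))
        ≤ ∑ _h ∈ Finset.univ.filter fun h => q h ≤ M - lam, Real.exp (ε * (M - lam) / 2) := by
          apply Finset.sum_le_sum
          intro h hh
          have := (Finset.mem_filter.mp hh).2
          apply Real.exp_le_exp.mpr
          apply div_le_div_of_nonneg_right _ (by norm_num)
          exact mul_le_mul_of_nonneg_left this hε.le
      _ = ((Finset.univ.filter fun h => q h ≤ M - lam).card : ℝ) *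
            Real.exp (ε * (M - lam) / 2) := by rw [Finset.sum_const, nsmul_eq_mul]
      _ ≤ (Fintype.card H : ℝ) * Real.exp (ε * (M - lam) / 2) := by
          apply mul_le_mul_of_nonneg_right _ (Real.exp_pos _).le
          exact_mod_cast Finset.card_filter_le _ _
  calc (∑ h ∈ Finset.univ.filter fun h => q h ≤ M - lam, Real.exp (ε * q h / 2))
      ≤ (Fintype.card H : ℝ) * Real.exp (ε * (M - lam) / 2) := hnum
    _ = (Fintype.card H : ℝ) * Real.exp (-(ε * lam) / 2) * Real.exp (ε * M / 2) := by
        rw [mul_assoc, ← Real.exp_add]; ring_nf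
    _ ≤ (Fintype.card H : ℝ) * Real.exp (-(ε * lam) / 2) * ∑ f, Real.exp (ε * q f / 2) := by
        apply mul_le_mul_of_nonneg_left hD
        positivity
end

section
/- Basic composition: Let D be a type of databases with a neighbor relation R, let Ω be a countable outcome type, let ε, δ ≥ 0, and let m ∈ ℕ. For each j ∈ {1,…,m}, let M_j : D → (list of previous outcomes in Ω^{j−1}) → PMF Ω be a mechanism such that for every fixed history of previous outcomes, the map S ↦ M_j(S, history) is (ε, δ)-differentially private with respect to R. Let M : D → PMF (Ω^m) be the adaptive composition, defined by sequentially sampling ω_1 ∼ M_1(S), ω_2 ∼ M_2(S, ω_1), …, ω_m ∼ M_m(S, ω_1,…,ω_{m−1}) via the monadic bind on PMFs. Then M is (m·ε, m·δ)-differentially private with respect to R. -/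
open scoped ENNReal NNReal


/-- `(ε,δ)`-differential privacy of a mechanism `M : D → PMF Ω` with respect to a
neighbor relation `R`. -/
def IsDP {D Ω : Type*} (R : D → D → Prop) (M : D → PMF Ω) (ε δ : ℝ) : Prop :=
  ∀ S S', R S S' → ∀ T : Set Ω,
    (M S).toOuterMeasure T ≤
      ENNReal.ofReal (Real.exp ε) * (M S').toOuterMeasure T + ENNReal.ofReal δ

/-- Adaptive composition of mechanisms `M j : D → List Ω → PMF Ω` (the second argument
is the history of previous outcomes), via monadic bind: `composeM M S m` sequentially
samples `ω_1 ∼ M 1 S []`, `ω_2 ∼ M 2 S [ω_1]`, …, returning the list `[ω_1, …, ω_m]`. -/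
noncomputable def composeM {D Ω : Type*} (M : ℕ → D → List Ω → PMF Ω) (S : D) :
    ℕ → PMF (List Ω)
  | 0 => PMF.pure []
  | m + 1 =>
    (composeM M S m).bind fun hist =>
      (M (m + 1) S hist).bind fun ω => PMF.pure (hist ++ [ω])

/-- A PMF assigns outer measure at most 1 to every set. -/
lemma pmf_toOuterMeasure_le_one {α : Type*} (p : PMF α) (T : Set α) :
    p.toOuterMeasure T ≤ 1 := by
  rw [PMF.toOuterMeasure_apply]
  calc ∑' x, T.indicator p x ≤ ∑' x, p x :=
        ENNReal.tsum_le_tsum fun x => Set.indicator_le_self T p x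
    _ = 1 := p.tsum_coe

/-- The hockey-stick characterization: an event-wise `(a, δ)` bound implies the pointwise
sum `∑' x, (p x - a * p' x) ≤ δ`. -/
lemma tsum_sub_le_of_dp {α : Type*} (p p' : PMF α) (a δ : ℝ≥0∞) (ha : a ≠ ⊤)
    (h : ∀ T : Set α, p.toOuterMeasure T ≤ a * p'.toOuterMeasure T + δ) :
    ∑' x, (p x - a * p' x) ≤ δ := by
  set T : Set α := {x | a * p' x < p x} with hT
  have hind : ∀ x, p x - a * p' x = T.indicator (fun y => p y - a * p' y) x := by
    intro x
    by_cases hx : x ∈ T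
    · rw [Set.indicator_of_mem hx]
    · rw [Set.indicator_of_notMem hx]
      exact tsub_eq_zero_of_le (not_lt.mp hx)
  have hsum : (∑' x, T.indicator (fun y => p y - a * p' y) x)
      + ∑' x, T.indicator (fun y => a * p' y) x = p.toOuterMeasure T := by
    rw [← ENNReal.tsum_add, PMF.toOuterMeasure_apply]
    refine tsum_congr fun x => ?_
    by_cases hx : x ∈ T
    · rw [Set.indicator_of_mem hx, Set.indicator_of_mem hx, Set.indicator_of_mem hx]
      exact tsub_add_cancel_of_le (le_of_lt hx)
    · simp [Set.indicator_of_notMem hx]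
  have hB : (∑' x, T.indicator (fun y => a * p' y) x) = a * p'.toOuterMeasure T := by
    rw [PMF.toOuterMeasure_apply, ← ENNReal.tsum_mul_left]
    refine tsum_congr fun x => ?_
    by_cases hx : x ∈ T <;> simp [Set.indicator_of_mem, Set.indicator_of_notMem, hx]
  have hBfin : a * p'.toOuterMeasure T ≠ ⊤ :=
    ENNReal.mul_ne_top ha (lt_of_le_of_lt (pmf_toOuterMeasure_le_one p' T)
      ENNReal.one_lt_top).ne
  have hle : (∑' x, T.indicator (fun y => p y - a * p' y) x) + a * p'.toOuterMeasure T
      ≤ δ + a * p'.toOuterMeasure T := by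
    calc (∑' x, T.indicator (fun y => p y - a * p' y) x) + a * p'.toOuterMeasure T
        = p.toOuterMeasure T := by rw [← hB]; exact hsum
      _ ≤ a * p'.toOuterMeasure T + δ := h T
      _ = δ + a * p'.toOuterMeasure T := add_comm _ _
  have := (ENNReal.add_le_add_iff_right hBfin).mp hle
  calc ∑' x, (p x - a * p' x)
      = ∑' x, T.indicator (fun y => p y - a * p' y) x := tsum_congr hind
    _ ≤ δ := this

/-- Basic composition: if each round `M j` (for any fixed history) is `(ε,δ)`-differentially
private, then the adaptive composition of `m` rounds is `(mε, mδ)`-differentially private. -/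
theorem stmt7 {D Ω : Type*} [Countable Ω] (R : D → D → Prop) (ε δ : ℝ)
    (hε : 0 ≤ ε) (hδ : 0 ≤ δ) (m : ℕ) (M : ℕ → D → List Ω → PMF Ω)
    (hM : ∀ j, 1 ≤ j → j ≤ m → ∀ hist : List Ω, IsDP R (fun S => M j S hist) ε δ) :
    IsDP R (fun S => composeM M S m) (m * ε) (m * δ) := by
  induction m with
  | zero =>
    intro S S' hR T
    simp [composeM]
  | succ m ih =>
    have IH : IsDP R (fun S => composeM M S m) (m * ε) (m * δ) :=
      ih (fun j h1 h2 hist => hM j h1 (h2.trans (Nat.le_succ m)) hist)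
    intro S S' hR T
    -- notation
    set p : PMF (List Ω) := composeM M S m with hp
    set p' : PMF (List Ω) := composeM M S' m with hp'
    set b : ℝ≥0∞ := ENNReal.ofReal (Real.exp (m * ε)) with hb
    set e : ℝ≥0∞ := ENNReal.ofReal (Real.exp ε) with he
    set dd : ℝ≥0∞ := ENNReal.ofReal δ with hdd
    have hb_ne_top : b ≠ ⊤ := ENNReal.ofReal_ne_top
    set g : List Ω → ℝ≥0∞ :=
      fun h => (M (m + 1) S h).toOuterMeasure {ω | h ++ [ω] ∈ T} with hg
    set g' : List Ω → ℝ≥0∞ :=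
      fun h => (M (m + 1) S' h).toOuterMeasure {ω | h ++ [ω] ∈ T} with hg'
    -- the composed measure is a mixture
    have hexp : ∀ (Q : D), (composeM M Q (m + 1)).toOuterMeasure T
        = ∑' h : List Ω, (composeM M Q m) h *
            (M (m + 1) Q h).toOuterMeasure {ω | h ++ [ω] ∈ T} := by
      intro Q
      show ((composeM M Q m).bind fun hist =>
          (M (m + 1) Q hist).bind fun ω => PMF.pure (hist ++ [ω])).toOuterMeasure T = _
      rw [PMF.toOuterMeasure_bind_apply]
      refine tsum_congr fun h => ?_
      congr 1
      rw [PMF.toOuterMeasure_bind_apply, PMF.toOuterMeasure_apply]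
      refine tsum_congr fun ω => ?_
      rw [PMF.toOuterMeasure_pure_apply]
      by_cases hω : h ++ [ω] ∈ T
      · rw [if_pos hω, mul_one,
          Set.indicator_of_mem (show ω ∈ {ω | h ++ [ω] ∈ T} from hω)]
      · rw [if_neg hω, mul_zero,
          Set.indicator_of_notMem (show ω ∉ {ω | h ++ [ω] ∈ T} from hω)]
    -- truncated distribution
    set μ : List Ω → ℝ≥0∞ := fun h => min (p h) (b * p' h) with hμ
    have hμ_le_p : ∀ h, μ h ≤ p h := fun h => min_le_left _ _
    have hμ_le_b : ∀ h, μ h ≤ b * p' h := fun h => min_le_right _ _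
    -- pointwise decomposition
    have hpoint : ∀ h, p h ≤ μ h + (p h - b * p' h) := by
      intro h
      rcases le_total (p h) (b * p' h) with hle | hle
      · rw [hμ]; simp only [min_eq_left hle]
        exact le_add_right le_rfl
      · rw [hμ]; simp only [min_eq_right hle]
        exact le_of_eq (add_tsub_cancel_of_le hle).symm
    -- hockey-stick bound from the induction hypothesis
    have hHS : ∑' h, (p h - b * p' h) ≤ ENNReal.ofReal (m * δ) :=
      tsum_sub_le_of_dp p p' b _ hb_ne_top (fun T' => IH S S' hR T')
    -- per-round DP bound
    have hround : ∀ h, g h ≤ e * g' h + dd := by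
      intro h
      exact hM (m + 1) (Nat.le_add_left 1 m) le_rfl h S S' hR {ω | h ++ [ω] ∈ T}
    have hg_le_one : ∀ h, g h ≤ 1 := fun h => pmf_toOuterMeasure_le_one _ _
    have hμ_sum : ∑' h, μ h ≤ 1 := by
      calc ∑' h, μ h ≤ ∑' h, p h := ENNReal.tsum_le_tsum hμ_le_p
        _ = 1 := p.tsum_coe
    -- main chain
    have main : (composeM M S (m + 1)).toOuterMeasure T
        ≤ e * b * ((composeM M S' (m + 1)).toOuterMeasure T)
          + (dd + ENNReal.ofReal (m * δ)) := by
      rw [hexp S, hexp S']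
      calc ∑' h, p h * (M (m + 1) S h).toOuterMeasure {ω | h ++ [ω] ∈ T}
          = ∑' h, p h * g h := rfl
        _ ≤ ∑' h, (μ h * g h + (p h - b * p' h) * g h) := by
            refine ENNReal.tsum_le_tsum fun h => ?_
            rw [← add_mul]
            exact mul_le_mul_left (hpoint h) _
        _ = (∑' h, μ h * g h) + ∑' h, (p h - b * p' h) * g h := ENNReal.tsum_add
        _ ≤ (∑' h, μ h * (e * g' h + dd)) + ∑' h, (p h - b * p' h) * 1 := by
            refine add_le_add (ENNReal.tsum_le_tsum fun h =>
                mul_le_mul_right (hround h) _)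
              (ENNReal.tsum_le_tsum fun h => mul_le_mul_right (hg_le_one h) _)
        _ = ((∑' h, μ h * (e * g' h)) + ∑' h, μ h * dd) + ∑' h, (p h - b * p' h) := by
            congr 1
            · rw [← ENNReal.tsum_add]
              exact tsum_congr fun h => mul_add _ _ _
            · exact tsum_congr fun h => mul_one _
        _ ≤ ((∑' h, (b * p' h) * (e * g' h)) + dd * ∑' h, μ h)
              + ENNReal.ofReal (m * δ) := by
            refine add_le_add (add_le_add (ENNReal.tsum_le_tsum fun h =>
                mul_le_mul_left (hμ_le_b h) _) ?_) hHS
            rw [← ENNReal.tsum_mul_left]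
            exact ENNReal.tsum_le_tsum fun h => le_of_eq (mul_comm _ _)
        _ ≤ (e * b * (∑' h, p' h * g' h) + dd * 1) + ENNReal.ofReal (m * δ) := by
            refine add_le_add (add_le_add ?_ (mul_le_mul_right hμ_sum dd)) le_rfl
            rw [← ENNReal.tsum_mul_left]
            refine le_of_eq (tsum_congr fun h => ?_)
            ring
        _ = e * b * (∑' h, p' h * g' h) + (dd + ENNReal.ofReal (m * δ)) := by
            rw [mul_one, add_assoc]
    -- convert constants
    have hc1 : e * b = ENNReal.ofReal (Real.exp ((m + 1 : ℕ) * ε)) := by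
      rw [he, hb, ← ENNReal.ofReal_mul (Real.exp_nonneg ε), ← Real.exp_add]
      congr 1
      push_cast
      ring
    have hc2 : dd + ENNReal.ofReal (m * δ) = ENNReal.ofReal ((m + 1 : ℕ) * δ) := by
      rw [hdd, ← ENNReal.ofReal_add hδ (by positivity)]
      congr 1
      push_cast
      ring
    calc (composeM M S (m + 1)).toOuterMeasure T
        ≤ e * b * ((composeM M S' (m + 1)).toOuterMeasure T)
          + (dd + ENNReal.ofReal (m * δ)) := main
      _ = ENNReal.ofReal (Real.exp ((m + 1 : ℕ) * ε)) *
            ((composeM M S' (m + 1)).toOuterMeasure T)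
          + ENNReal.ofReal ((m + 1 : ℕ) * δ) := by rw [hc1, hc2]
end

section
/- Let d ≥ 1 be an integer and X_d = {0, 1, …, d}. For all real numbers a, b, c, there exist real numbers a', b' ∈ [−2d², 2d²] and a sign z ∈ {−1, 1} such that for every point (x, y) ∈ X_d × X_d: (c·y ≥ a·x + b) if and only if (z·y ≥ z·(a'·x + b')). In other words, every halfplane over ℝ² agrees on the grid X_d² with a halfplane defined by a non-vertical line with coefficients bounded in absolute value by 2d². -/
/-!
On the grid, the halfplane `y ≥ A x + B` only depends on which cell of
`(-∞, 0], (0, 1], …, (d - 1, d], (d, ∞)` each value `A x + B` lies in. If `|A| ≤ d` and the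
halfplane is neither empty nor everything on the grid, then `|B| ≤ d² + d` already. If `|A| > d`,
consecutive values differ by more than `d`, so the cells jump from "every point" to "no point" (or
back) at a single column `x₀`; a line of slope `±(d + 1/2)` through a suitably clamped value at `x₀`
has the same cells. A halfplane `c y ≥ a x + b` with `c < 0` becomes one with `c > 0` under
`y ↦ d - y`, and one with `c = 0` becomes `K (a x + b) ≤ y` for a large `K`.
-/

open Filter

def SameCell (d : ℕ) (u v : ℝ) : Prop :=
  ∀ y : ℕ, y ≤ d → (u ≤ y ↔ v ≤ y)

namespace SameCell

variable {d : ℕ} {u v : ℝ}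

lemma of_nonpos (hu : u ≤ 0) (hv : v ≤ 0) : SameCell d u v := fun y _ =>
  ⟨fun _ => hv.trans y.cast_nonneg, fun _ => hu.trans y.cast_nonneg⟩

lemma of_lt (hu : (d : ℝ) < u) (hv : (d : ℝ) < v) : SameCell d u v := fun y hy => by
  have : (y : ℝ) ≤ d := by exact_mod_cast hy
  constructor <;> intro <;> linarith

lemma clamp_of_pos (hu : 0 < u) : SameCell d u (max (1 / 2) (min u (d + 1 / 2))) := by
  intro y hy
  have hyd : (y : ℝ) ≤ d := by exact_mod_cast hy
  simp only [max_le_iff, min_le_iff]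
  rcases Nat.eq_zero_or_pos y with rfl | hy₁
  · exact iff_of_false (by simpa using hu) (by norm_num)
  · have : (1 : ℝ) ≤ y := by exact_mod_cast hy₁
    constructor
    · exact fun h => ⟨by linarith, Or.inl h⟩
    · rintro ⟨-, h | h⟩
      · exact h
      · linarith

lemma clamp_of_le (hu : u ≤ d) : SameCell d u (max 0 (min u (d - 1 / 2))) := by
  intro y hy
  simp only [max_le_iff, min_le_iff, Nat.cast_nonneg, true_and]
  rcases hy.lt_or_eq with hy | rfl
  · have : (y : ℝ) + 1 ≤ d := by exact_mod_cast hy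
    constructor
    · exact Or.inl
    · rintro (h | h)
      · exact h
      · linarith
  · exact ⟨fun _ => Or.inr (by linarith), fun _ => hu⟩

end SameCell

section BoundedLine

variable {d : ℕ} {A B : ℝ}

lemma exists_sameCell_of_lt_slope (hd : 1 ≤ d) (hA : (d : ℝ) < A)
    (hpos : ∃ x, x ≤ d ∧ 0 < A * x + B) :
    ∃ b' ∈ Set.Icc ((d : ℝ) - 2 * d ^ 2) (2 * (d : ℝ) ^ 2),
      ∀ x ≤ d, SameCell d (A * x + B) ((d + 1 / 2) * x + b') := by
  classical
  have hD : (1 : ℝ) ≤ d := by exact_mod_cast hd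
  set x₀ := Nat.find hpos
  obtain ⟨hx₀, h₀⟩ : x₀ ≤ d ∧ 0 < A * x₀ + B := Nat.find_spec hpos
  have hx₀' : (x₀ : ℝ) ≤ d := by exact_mod_cast hx₀
  -- `v` has the cell of `A x₀ + B`; `1/2 ≤ v` lifts column `x₀ + 1` above `d`, and
  -- `v ≤ d + 1/2` keeps column `x₀ - 1` at most `0`.
  set v := max (1 / 2) (min (A * x₀ + B) (d + 1 / 2))
  have hv₁ : 1 / 2 ≤ v := le_max_left _ _
  have hv₂ : v ≤ d + 1 / 2 := max_le (by linarith) (min_le_right _ _)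
  refine ⟨v - (d + 1 / 2) * x₀, ⟨by nlinarith, by nlinarith⟩, fun x hx => ?_⟩
  rcases lt_trichotomy x x₀ with h | rfl | h
  · have hx : (x : ℝ) + 1 ≤ x₀ := by exact_mod_cast h
    have hleft : A * x + B ≤ 0 := by
      by_contra! hpos'
      exact Nat.find_min hpos h ⟨by omega, hpos'⟩
    exact .of_nonpos hleft (by nlinarith)
  · convert SameCell.clamp_of_pos h₀ using 1
    ring
  · have hx : (x₀ : ℝ) + 1 ≤ x := by exact_mod_cast h
    exact .of_lt (by nlinarith) (by nlinarith)

lemma exists_sameCell_of_slope_lt_neg (hd : 1 ≤ d) (hA : A < -d)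
    (hle : ∃ x, x ≤ d ∧ A * x + B ≤ d) :
    ∃ b' ∈ Set.Icc ((d : ℝ) - 2 * d ^ 2) (2 * (d : ℝ) ^ 2),
      ∀ x ≤ d, SameCell d (A * x + B) (-(d + 1 / 2) * x + b') := by
  classical
  have hD : (1 : ℝ) ≤ d := by exact_mod_cast hd
  set x₀ := Nat.find hle
  obtain ⟨hx₀, h₀⟩ : x₀ ≤ d ∧ A * x₀ + B ≤ d := Nat.find_spec hle
  have hx₀' : (x₀ : ℝ) ≤ d := by exact_mod_cast hx₀
  set v := max 0 (min (A * x₀ + B) (d - 1 / 2))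
  have hv₁ : 0 ≤ v := le_max_left _ _
  have hv₂ : v ≤ d - 1 / 2 := max_le (by linarith) (min_le_right _ _)
  refine ⟨v + (d + 1 / 2) * x₀, ⟨by nlinarith, by nlinarith⟩, fun x hx => ?_⟩
  rcases lt_trichotomy x x₀ with h | rfl | h
  · have hx : (x : ℝ) + 1 ≤ x₀ := by exact_mod_cast h
    have hleft : (d : ℝ) < A * x + B := by
      by_contra! hle'
      exact Nat.find_min hle h ⟨by omega, hle'⟩
    exact .of_lt hleft (by nlinarith)
  · convert SameCell.clamp_of_le h₀ using 1
    ring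
  · have hx : (x₀ : ℝ) + 1 ≤ x := by exact_mod_cast h
    exact .of_nonpos (by nlinarith) (by nlinarith)

-- The lower bound `d - 2d²` on `b'` is what survives the reflection `b' ↦ d - b'` used for `c < 0`.
theorem exists_bounded_sameCell (hd : 1 ≤ d) (A B : ℝ) :
    ∃ a' ∈ Set.Icc (-(2 * (d : ℝ) ^ 2)) (2 * (d : ℝ) ^ 2),
      ∃ b' ∈ Set.Icc ((d : ℝ) - 2 * d ^ 2) (2 * (d : ℝ) ^ 2),
        ∀ x ≤ d, SameCell d (A * x + B) (a' * x + b') := by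
  have hD : (1 : ℝ) ≤ d := by exact_mod_cast hd
  by_cases hnonpos : ∀ x ≤ d, A * x + B ≤ 0
  · exact ⟨0, ⟨by nlinarith, by nlinarith⟩, 0, ⟨by nlinarith, by nlinarith⟩,
      fun x hx => .of_nonpos (hnonpos x hx) (by simp)⟩
  by_cases hlarge : ∀ x ≤ d, (d : ℝ) < A * x + B
  · exact ⟨0, ⟨by nlinarith, by nlinarith⟩, d + 1, ⟨by nlinarith, by nlinarith⟩,
      fun x hx => .of_lt (hlarge x hx) (by simp)⟩
  push Not at hnonpos hlarge
  rcases lt_or_ge (d : ℝ) A with hA | hA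
  · obtain ⟨b', hb', h⟩ := exists_sameCell_of_lt_slope hd hA hnonpos
    exact ⟨d + 1 / 2, ⟨by nlinarith, by nlinarith⟩, b', hb', h⟩
  rcases lt_or_ge A (-d) with hA' | hA'
  · obtain ⟨b', hb', h⟩ := exists_sameCell_of_slope_lt_neg hd hA' hlarge
    exact ⟨-(d + 1 / 2), ⟨by nlinarith, by nlinarith⟩, b', hb', h⟩
  obtain ⟨x₁, hx₁, h₁⟩ := hlarge
  obtain ⟨x₂, hx₂, h₂⟩ := hnonpos
  have hx₁' : (x₁ : ℝ) ≤ d := by exact_mod_cast hx₁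
  have hx₂' : (x₂ : ℝ) ≤ d := by exact_mod_cast hx₂
  refine ⟨A, ⟨by nlinarith, by nlinarith⟩, B, ⟨?_, ?_⟩, fun x _ y _ => Iff.rfl⟩
  · nlinarith [mul_le_mul_of_nonneg_right (le_abs_self A) x₂.cast_nonneg]
  · nlinarith [mul_le_mul_of_nonneg_right (neg_abs_le A) x₁.cast_nonneg]

end BoundedLine

lemma exists_nonneg_forall_lt_mul {ι : Type*} (s : Finset ι) (f : ι → ℝ) (M : ℝ) :
    ∃ K : ℝ, 0 ≤ K ∧ ∀ i ∈ s, 0 < f i → M < K * f i := by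
  have h : ∀ᶠ K in atTop, ∀ i ∈ s, 0 < f i → M < K * f i :=
    (eventually_all_finset s).2 fun i _ => by
      by_cases hi : 0 < f i
      · exact ((tendsto_id.atTop_mul_const hi).eventually_gt_atTop M).mono fun K hK _ => hK
      · exact .of_forall fun _ hi' => absurd hi' hi
  exact (h.and (eventually_ge_atTop 0)).exists.imp fun K hK => ⟨hK.2, hK.1⟩

lemma exists_ge_iff_le_of_nonneg (d : ℕ) {a b c : ℝ} (hc : 0 ≤ c) :
    ∃ A B : ℝ, ∀ x y : ℕ, x ≤ d → y ≤ d → (c * y ≥ a * x + b ↔ A * x + B ≤ y) := by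
  rcases hc.lt_or_eq with hc | rfl
  · refine ⟨a / c, b / c, fun x y _ _ => ?_⟩
    rw [show a / c * x + b / c = (a * x + b) / c by ring, div_le_iff₀ hc, mul_comm, ge_iff_le]
  · obtain ⟨K, hK, hlarge⟩ := exists_nonneg_forall_lt_mul (Finset.range (d + 1))
      (fun x : ℕ => a * x + b) d
    refine ⟨K * a, K * b, fun x y hx hy => ?_⟩
    have hy' : (y : ℝ) ≤ d := by exact_mod_cast hy
    rw [zero_mul, mul_assoc, ← mul_add]
    by_cases hpos : 0 < a * x + b
    · have := hlarge x (Finset.mem_range.2 (by omega)) hpos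
      constructor <;> intro <;> linarith
    · push Not at hpos
      exact ⟨fun _ => (mul_nonpos_of_nonneg_of_nonpos hK hpos).trans y.cast_nonneg,
        fun _ => hpos⟩

/-- Every halfplane `{(x,y) : c·y ≥ a·x + b}` over `ℝ²` agrees on the grid
`{0,…,d}²` with a bounded-coefficient halfplane `{(x,y) : z·y ≥ z·(a'·x + b')}` where
`a', b' ∈ [−2d², 2d²]` and `z ∈ {−1, 1}`. -/
theorem stmt9 (d : ℕ) (hd : 1 ≤ d) (a b c : ℝ) :
    ∃ a' b' z : ℝ,
      a' ∈ Set.Icc (-(2 * (d : ℝ) ^ 2)) (2 * (d : ℝ) ^ 2) ∧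
      b' ∈ Set.Icc (-(2 * (d : ℝ) ^ 2)) (2 * (d : ℝ) ^ 2) ∧
      (z = -1 ∨ z = 1) ∧
      ∀ x y : ℕ, x ≤ d → y ≤ d →
        (c * y ≥ a * x + b ↔ z * y ≥ z * (a' * x + b')) := by
  have hd₀ : (0 : ℝ) ≤ d := d.cast_nonneg
  rcases le_or_gt 0 c with hc | hc
  · obtain ⟨A, B, hAB⟩ := exists_ge_iff_le_of_nonneg d (a := a) (b := b) hc
    obtain ⟨a', ha', b', ⟨hb₁, hb₂⟩, hcell⟩ := exists_bounded_sameCell hd A B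
    refine ⟨a', b', 1, ha', ⟨by linarith, hb₂⟩, Or.inr rfl, fun x y hx hy => ?_⟩
    rw [hAB x y hx hy, hcell x hx y hy, one_mul, one_mul, ge_iff_le]
  obtain ⟨A, B, hAB⟩ := exists_ge_iff_le_of_nonneg d (a := a) (b := b - c * d) (c := -c)
    (by linarith)
  obtain ⟨a', ha', b', ⟨hb₁, hb₂⟩, hcell⟩ := exists_bounded_sameCell hd A B
  refine ⟨-a', d - b', -1, ⟨by linarith [ha'.2], by linarith [ha'.1]⟩, ⟨by linarith, by linarith⟩,
    Or.inl rfl, fun x y hx hy => ?_⟩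
  have hrefl := (hAB x (d - y) hx (d.sub_le y)).trans (hcell x hx (d - y) (d.sub_le y))
  rw [Nat.cast_sub hy] at hrefl
  calc c * y ≥ a * x + b ↔ -c * (d - y) ≥ a * x + (b - c * d) := by
        constructor <;> intro <;> linarith
    _ ↔ a' * x + b' ≤ d - y := hrefl
    _ ↔ -1 * y ≥ -1 * (-a' * x + (d - b')) := by constructor <;> intro <;> linarith
end

section
/- For every finite set L of n distinct lines in ℝ², the number of connected components of ℝ² \ ⋃_{ℓ∈L} ℓ is at most 1 + n + n(n−1)/2. In particular, for n ≥ 2 the n lines divide the plane into at most n² regions. -/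
attribute [local instance] Classical.propDecidable

/-- A set is a line. -/
def IsAffLine (ℓ : Set (ℝ × ℝ)) : Prop :=
  ∃ α β γ : ℝ, (α, β) ≠ (0, 0) ∧ ℓ = {q : ℝ × ℝ | α * q.1 + β * q.2 = γ}

/-- Chosen coefficients (α, β, γ) for a line. -/
noncomputable def lcoef (ℓ : Set (ℝ × ℝ)) : ℝ × ℝ × ℝ :=
  if h : IsAffLine ℓ then
    (h.choose, h.choose_spec.choose, h.choose_spec.choose_spec.choose) else (1, 0, 0)

/-- The chosen affine functional vanishing exactly on the line. -/
noncomputable def lf (ℓ : Set (ℝ × ℝ)) (q : ℝ × ℝ) : ℝ :=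
  (lcoef ℓ).1 * q.1 + (lcoef ℓ).2.1 * q.2 - (lcoef ℓ).2.2

lemma lcoef_ne (ℓ : Set (ℝ × ℝ)) (h : IsAffLine ℓ) :
    ((lcoef ℓ).1, (lcoef ℓ).2.1) ≠ (0, 0) := by
  rw [lcoef, dif_pos h]
  exact h.choose_spec.choose_spec.choose_spec.1

lemma line_eq_zero (ℓ : Set (ℝ × ℝ)) (h : IsAffLine ℓ) :
    ℓ = {q : ℝ × ℝ | lf ℓ q = 0} := by
  have h2 := h.choose_spec.choose_spec.choose_spec.2
  have hc : lcoef ℓ = (h.choose, h.choose_spec.choose, h.choose_spec.choose_spec.choose) := by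
    rw [lcoef, dif_pos h]
  have hlf : ∀ q : ℝ × ℝ, lf ℓ q =
      h.choose * q.1 + h.choose_spec.choose * q.2 - h.choose_spec.choose_spec.choose := by
    intro q; rw [lf, hc]
  ext q
  have hmem : q ∈ ℓ ↔ h.choose * q.1 + h.choose_spec.choose * q.2
      = h.choose_spec.choose_spec.choose := Set.ext_iff.mp h2 q
  rw [Set.mem_setOf_eq, hlf q, hmem]
  constructor <;> intro hq <;> linarith

/-- Sign vector of a point w.r.t. a finite set of lines. -/
noncomputable def sgnv (L : Finset (Set (ℝ × ℝ))) (x : ℝ × ℝ) : Finset (Set (ℝ × ℝ)) :=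
  L.filter (fun m => 0 < lf m x)

def bigU (L : Finset (Set (ℝ × ℝ))) : Set (ℝ × ℝ) := ⋃ ℓ ∈ L, ℓ

/-- The set of realized sign vectors. -/
noncomputable def realized (L : Finset (Set (ℝ × ℝ))) : Set (Finset (Set (ℝ × ℝ))) :=
  sgnv L '' (bigU L)ᶜ

lemma mem_sgnv {L : Finset (Set (ℝ × ℝ))} {x : ℝ × ℝ} {m : Set (ℝ × ℝ)} :
    m ∈ sgnv L x ↔ m ∈ L ∧ 0 < lf m x := Finset.mem_filter

lemma mem_compl_bigU {L : Finset (Set (ℝ × ℝ))} (hL : ∀ m ∈ L, IsAffLine m) {x : ℝ × ℝ} :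
    x ∈ (bigU L)ᶜ ↔ ∀ m ∈ L, lf m x ≠ 0 := by
  have : x ∈ bigU L ↔ ∃ m ∈ L, x ∈ m := by
    simp only [bigU, Set.mem_iUnion, exists_prop]
  rw [Set.mem_compl_iff, this, not_exists]
  constructor
  · intro h m hm hz
    exact h m ⟨hm, by rw [line_eq_zero m (hL m hm)]; exact hz⟩
  · rintro h m ⟨hm, hx⟩
    exact h m hm (by rw [line_eq_zero m (hL m hm)] at hx; exact hx)

lemma realized_finite (L : Finset (Set (ℝ × ℝ))) : (realized L).Finite := by
  apply Set.Finite.subset (Finset.finite_toSet L.powerset)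
  rintro v ⟨x, _, rfl⟩
  simp only [Finset.coe_powerset, Set.mem_preimage, Set.mem_powerset_iff, Finset.coe_subset]
  exact Finset.filter_subset _ _

lemma lf_combo (m : Set (ℝ × ℝ)) {a b : ℝ} (hab : a + b = 1) (z w : ℝ × ℝ) :
    lf m (a • z + b • w) = a * lf m z + b * lf m w := by
  simp only [lf, Prod.fst_add, Prod.snd_add, Prod.smul_fst, Prod.smul_snd, smul_eq_mul]
  linear_combination ((lcoef m).2.2) * hab

lemma combo_pos {a b p q : ℝ} (ha : 0 ≤ a) (hb : 0 ≤ b) (hab : a + b = 1)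
    (hp : 0 < p) (hq : 0 < q) : 0 < a * p + b * q := by
  rcases ha.eq_or_lt with h | h
  · simp [← h, show b = 1 by linarith, hq]
  · nlinarith

lemma combo_neg {a b p q : ℝ} (ha : 0 ≤ a) (hb : 0 ≤ b) (hab : a + b = 1)
    (hp : p < 0) (hq : q < 0) : a * p + b * q < 0 := by
  have := combo_pos ha hb hab (neg_pos.2 hp) (neg_pos.2 hq)
  nlinarith
/-- If the value of `f` can only change when crossing a point of `T`, the image has
at most `T.card + 1` values. -/
lemma image_card_le_of_changes {X : Type*} (f : ℝ → X) (S : Set ℝ) (T : Finset ℝ)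
    (h : ∀ t1 ∈ S, ∀ t2 ∈ S, t1 < t2 → f t1 ≠ f t2 → ∃ r ∈ T, t1 < r ∧ r < t2) :
    (f '' S).Finite ∧ (f '' S).ncard ≤ T.card + 1 := by
  classical
  set c : X → ℕ := fun v => if hv : v ∈ f '' S then (T.filter (· < hv.choose)).card else 0
    with hc
  have hinj : Set.InjOn c (f '' S) := by
    intro v hv w hw hvw
    by_contra hne
    have hcv : c v = (T.filter (· < hv.choose)).card := by rw [hc]; simp only [dif_pos hv]
    have hcw : c w = (T.filter (· < hw.choose)).card := by rw [hc]; simp only [dif_pos hw]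
    obtain ⟨hvS, hvf⟩ := hv.choose_spec
    obtain ⟨hwS, hwf⟩ := hw.choose_spec
    have htne : hv.choose ≠ hw.choose := fun e => hne (hvf ▸ hwf ▸ e ▸ rfl)
    have key : ∀ s t : ℝ, s < t → (∃ r ∈ T, s < r ∧ r < t) →
        (T.filter (· < s)).card < (T.filter (· < t)).card := by
      rintro s t hst ⟨r, hrT, hsr, hrt⟩
      apply Finset.card_lt_card
      constructor
      · intro u hu
        rw [Finset.mem_filter] at hu ⊢
        exact ⟨hu.1, hu.2.trans hst⟩
      · intro hsub
        have : r ∈ T.filter (· < t) := Finset.mem_filter.2 ⟨hrT, hrt⟩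
        have := Finset.mem_filter.1 (hsub this)
        linarith [this.2]
    rcases lt_trichotomy hv.choose hw.choose with hlt | heq | hgt
    · have := key _ _ hlt (h _ hvS _ hwS hlt (by rw [hvf, hwf]; exact hne))
      omega
    · exact htne heq
    · have := key _ _ hgt (h _ hwS _ hvS hgt (by rw [hvf, hwf]; exact fun e => hne e.symm))
      omega
  have hsub : c '' (f '' S) ⊆ Set.Iic T.card := by
    rintro k ⟨v, hv, rfl⟩
    simp only [Set.mem_Iic, hc, dif_pos hv]
    exact Finset.card_le_card (Finset.filter_subset _ _)
  have hfin2 : (c '' (f '' S)).Finite := (Set.finite_Iic _).subset hsub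
  have hfin : (f '' S).Finite := Set.Finite.of_finite_image hfin2 hinj
  refine ⟨hfin, ?_⟩
  calc (f '' S).ncard = (c '' (f '' S)).ncard := (Set.ncard_image_of_injOn hinj).symm
    _ ≤ (Set.Iic T.card).ncard := Set.ncard_le_ncard hsub (Set.finite_Iic _)
    _ = T.card + 1 := by
        rw [← Finset.coe_Iic, Set.ncard_coe_finset, Nat.card_Iic]
lemma cross_card_le (ℓ : Set (ℝ × ℝ)) (L : Finset (Set (ℝ × ℝ))) (hℓ : IsAffLine ℓ)
    (hL : ∀ m ∈ L, IsAffLine m) (hnot : ℓ ∉ L) :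
    (sgnv L '' (ℓ ∩ (bigU L)ᶜ)).Finite ∧
      (sgnv L '' (ℓ ∩ (bigU L)ᶜ)).ncard ≤ L.card + 1 := by
  classical
  set a : ℝ := (lcoef ℓ).1 with haa
  set b : ℝ := (lcoef ℓ).2.1 with hbb
  set c : ℝ := (lcoef ℓ).2.2 with hcc
  have hab : a ≠ 0 ∨ b ≠ 0 := by
    by_contra h
    push_neg at h
    exact lcoef_ne ℓ hℓ (by rw [← haa, ← hbb, h.1, h.2])
  have hd : 0 < a ^ 2 + b ^ 2 := by
    rcases hab with h | h
    · positivity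
    · positivity
  have hd' : a ^ 2 + b ^ 2 ≠ 0 := ne_of_gt hd
  set φ : ℝ → ℝ × ℝ :=
    fun t => (a * c / (a ^ 2 + b ^ 2) - t * b, b * c / (a ^ 2 + b ^ 2) + t * a) with hφ
  have hlfℓ : ∀ q : ℝ × ℝ, lf ℓ q = a * q.1 + b * q.2 - c := fun q => rfl
  have hφℓ : ∀ t, φ t ∈ ℓ := by
    intro t
    rw [line_eq_zero ℓ hℓ, Set.mem_setOf_eq, hlfℓ]
    simp only [hφ]
    field_simp
    ring
  have hsurj : ∀ q ∈ ℓ, ∃ t, φ t = q := by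
    intro q hq
    rw [line_eq_zero ℓ hℓ, Set.mem_setOf_eq, hlfℓ] at hq
    refine ⟨(a * q.2 - b * q.1) / (a ^ 2 + b ^ 2), ?_⟩
    simp only [hφ]
    have h1 : a * c / (a ^ 2 + b ^ 2) - (a * q.2 - b * q.1) / (a ^ 2 + b ^ 2) * b = q.1 := by
      field_simp
      linear_combination (-a) * hq
    have h2 : b * c / (a ^ 2 + b ^ 2) + (a * q.2 - b * q.1) / (a ^ 2 + b ^ 2) * a = q.2 := by
      field_simp
      linear_combination (-b) * hq
    rw [h1, h2]
  set A : Set (ℝ × ℝ) → ℝ := fun m => -(lcoef m).1 * b + (lcoef m).2.1 * a with hA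
  set B : Set (ℝ × ℝ) → ℝ := fun m =>
    (lcoef m).1 * (a * c / (a ^ 2 + b ^ 2)) + (lcoef m).2.1 * (b * c / (a ^ 2 + b ^ 2))
      - (lcoef m).2.2 with hB
  have hlfφ : ∀ m t, lf m (φ t) = A m * t + B m := by
    intro m t
    simp only [hφ, hA, hB, lf]
    ring
  -- no line of L is degenerate along ℓ
  have hAB : ∀ m ∈ L, A m ≠ 0 ∨ B m ≠ 0 := by
    intro m hm
    by_contra hcon
    push_neg at hcon
    obtain ⟨hA0, hB0⟩ := hcon
    -- then m = ℓ
    apply hnot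
    have hmℓ : m = ℓ := by
      set α : ℝ := (lcoef m).1 with hαα
      set β : ℝ := (lcoef m).2.1 with hββ
      set γ : ℝ := (lcoef m).2.2 with hγγ
      have hαβ : α ≠ 0 ∨ β ≠ 0 := by
        by_contra h
        push_neg at h
        exact lcoef_ne m (hL m hm) (by rw [← hαα, ← hββ, h.1, h.2])
      have hlfm : ∀ q : ℝ × ℝ, lf m q = α * q.1 + β * q.2 - γ := fun q => rfl
      have hA0' : -α * b + β * a = 0 := hA0
      have hB0' : α * (a * c / (a ^ 2 + b ^ 2)) + β * (b * c / (a ^ 2 + b ^ 2)) - γ = 0 := hB0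
      have key : ∀ q : ℝ × ℝ, lf m q = 0 ↔ lf ℓ q = 0 := by
        rcases Classical.em (a ≠ 0) with ha | ha
        · have hα : α ≠ 0 := by
            intro h0
            rcases hαβ with h | h
            · exact h h0
            · apply h
              have : β * a = 0 := by rw [h0] at hA0'; linarith
              exact (mul_eq_zero.mp this).resolve_right ha
          have hγ' : a * γ = α * c := by
            field_simp at hB0'
            have hβ' : β * a = α * b := by linarith
            have h2 : (a ^ 2 + b ^ 2) * (a * γ) = (a ^ 2 + b ^ 2) * (α * c) := by
              linear_combination (-a) * hB0' + (b * c) * hβ'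
            exact mul_left_cancel₀ hd' h2
          have hlin : ∀ q : ℝ × ℝ, a * lf m q = α * lf ℓ q := by
            intro q
            rw [hlfm, hlfℓ]
            linear_combination q.2 * hA0' - hγ'
          intro q
          constructor
          · intro h0
            have := hlin q
            rw [h0, mul_zero] at this
            exact (mul_eq_zero.mp this.symm).resolve_left hα
          · intro h0
            have := hlin q
            rw [h0, mul_zero] at this
            exact (mul_eq_zero.mp this).resolve_left ha
        · push_neg at ha
          have hb : b ≠ 0 := hab.resolve_left (by simp [ha])
          have hα0 : α = 0 := by
            have : α * b = 0 := by rw [ha] at hA0'; linarith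
            exact (mul_eq_zero.mp this).resolve_right hb
          have hβ : β ≠ 0 := hαβ.resolve_left (by simp [hα0])
          have hγ' : b * γ = β * c := by
            rw [ha, hα0] at hB0'
            field_simp at hB0'
            have h2 : b * (b * γ) = b * (β * c) := by linear_combination -hB0'
            exact mul_left_cancel₀ hb h2
          have hlin : ∀ q : ℝ × ℝ, b * lf m q = β * lf ℓ q := by
            intro q
            rw [hlfm, hlfℓ, ha, hα0]
            linear_combination -hγ'
          intro q
          constructor
          · intro h0
            have := hlin q
            rw [h0, mul_zero] at this
            exact (mul_eq_zero.mp this.symm).resolve_left hβ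
          · intro h0
            have := hlin q
            rw [h0, mul_zero] at this
            exact (mul_eq_zero.mp this).resolve_left hb
      rw [line_eq_zero m (hL m hm), line_eq_zero ℓ hℓ]
      ext q
      exact key q
    rw [← hmℓ]
    exact hm
  set S : Set ℝ := {t | φ t ∈ (bigU L)ᶜ} with hS
  set T : Finset ℝ := (L.filter (fun m => A m ≠ 0)).image (fun m => -(B m) / (A m)) with hT
  have hTcard : T.card ≤ L.card :=
    le_trans Finset.card_image_le (Finset.card_filter_le _ _)
  have main := image_card_le_of_changes (fun t => sgnv L (φ t)) S T ?_
  · have hsub : sgnv L '' (ℓ ∩ (bigU L)ᶜ) ⊆ (fun t => sgnv L (φ t)) '' S := by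
      rintro v ⟨q, ⟨hqℓ, hqc⟩, rfl⟩
      obtain ⟨t, rfl⟩ := hsurj q hqℓ
      exact ⟨t, hqc, rfl⟩
    refine ⟨main.1.subset hsub, ?_⟩
    calc (sgnv L '' (ℓ ∩ (bigU L)ᶜ)).ncard
        ≤ ((fun t => sgnv L (φ t)) '' S).ncard := Set.ncard_le_ncard hsub main.1
      _ ≤ T.card + 1 := main.2
      _ ≤ L.card + 1 := by omega
  · -- sign changes only across roots
    intro t1 ht1 t2 ht2 hlt hne
    have hne' : sgnv L (φ t1) ≠ sgnv L (φ t2) := hne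
    have hex : ∃ m, ¬(m ∈ sgnv L (φ t1) ↔ m ∈ sgnv L (φ t2)) := by
      by_contra h
      push_neg at h
      exact hne' (Finset.ext fun m => h m)
    obtain ⟨m, hm⟩ := hex
    rw [mem_sgnv, mem_sgnv] at hm
    have hmL : m ∈ L := by
      by_contra h
      exact hm (by simp [h])
    have hmm : ¬((0 < lf m (φ t1)) ↔ (0 < lf m (φ t2))) :=
      fun h => hm (and_congr_right fun _ => h)
    have h1 : lf m (φ t1) ≠ 0 := (mem_compl_bigU hL).mp ht1 m hmL
    have h2 : lf m (φ t2) ≠ 0 := (mem_compl_bigU hL).mp ht2 m hmL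
    have hAm : A m ≠ 0 := by
      intro h0
      apply hmm
      rw [hlfφ, hlfφ, h0, zero_mul, zero_mul]
    have hr : -(B m) / (A m) ∈ T :=
      Finset.mem_image.2 ⟨m, Finset.mem_filter.2 ⟨hmL, hAm⟩, rfl⟩
    refine ⟨-(B m) / (A m), hr, ?_⟩
    rw [hlfφ] at h1 h2
    have e1 : lf m (φ t1) = A m * t1 + B m := hlfφ m t1
    have e2 : lf m (φ t2) = A m * t2 + B m := hlfφ m t2
    rcases lt_or_gt_of_ne h1 with hn1 | hp1 <;> rcases lt_or_gt_of_ne h2 with hn2 | hp2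
    · exact absurd (iff_of_false (by rw [e1]; linarith) (by rw [e2]; linarith)) hmm
    · -- A t1 + B < 0 < A t2 + B, so A > 0
      have hApos : 0 < A m := by nlinarith
      constructor
      · rw [lt_div_iff₀ hApos]; linarith
      · rw [div_lt_iff₀ hApos]; linarith
    · -- A t1 + B > 0 > A t2 + B, so A < 0
      have hAneg : A m < 0 := by nlinarith
      constructor
      · rw [lt_div_iff_of_neg hAneg]; linarith
      · rw [div_lt_iff_of_neg hAneg]; linarith
    · exact absurd (iff_of_true (by rw [e1]; linarith) (by rw [e2]; linarith)) hmm
lemma sgnv_insert_erase {ℓ : Set (ℝ × ℝ)} {L : Finset (Set (ℝ × ℝ))} (hnot : ℓ ∉ L)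
    (x : ℝ × ℝ) : (sgnv (insert ℓ L) x).erase ℓ = sgnv L x := by
  classical
  have hsub : ℓ ∉ sgnv L x := fun h => hnot (mem_sgnv.mp h).1
  rw [sgnv, Finset.filter_insert]
  split
  · exact Finset.erase_insert hsub
  · exact Finset.erase_eq_of_notMem hsub

lemma compl_mono_insert {ℓ : Set (ℝ × ℝ)} {L : Finset (Set (ℝ × ℝ))} {x : ℝ × ℝ}
    (h : x ∈ (bigU (insert ℓ L))ᶜ) : x ∈ (bigU L)ᶜ := by
  intro hx
  apply h
  simp only [bigU, Set.mem_iUnion, exists_prop] at hx ⊢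
  obtain ⟨m, hm, hxm⟩ := hx
  exact ⟨m, Finset.mem_insert_of_mem hm, hxm⟩

lemma realized_step (ℓ : Set (ℝ × ℝ)) (L : Finset (Set (ℝ × ℝ))) (hℓ : IsAffLine ℓ)
    (hL : ∀ m ∈ L, IsAffLine m) (hnot : ℓ ∉ L) :
    (realized (insert ℓ L)).ncard ≤ (realized L).ncard + (L.card + 1) := by
  classical
  set A := realized (insert ℓ L) with hA
  set A1 := {σ ∈ A | ℓ ∉ σ} with hA1
  set A2 := {σ ∈ A | ℓ ∈ σ} with hA2
  have hAfin : A.Finite := realized_finite _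
  have hA1fin : A1.Finite := hAfin.subset (Set.sep_subset _ _)
  have hA2fin : A2.Finite := hAfin.subset (Set.sep_subset _ _)
  set A2' := (fun σ => σ.erase ℓ) '' A2 with hA2'
  have hinj : Set.InjOn (fun σ => σ.erase ℓ) A2 := by
    intro σ hσ τ hτ h
    have h' : σ.erase ℓ = τ.erase ℓ := h
    rw [← Finset.insert_erase hσ.2, ← Finset.insert_erase hτ.2, h']
  -- A1 and A2' are both sets of realized sign vectors of L
  have hA1sub : A1 ⊆ realized L := by
    rintro σ ⟨⟨x, hx, rfl⟩, hσ⟩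
    refine ⟨x, compl_mono_insert hx, ?_⟩
    rw [← sgnv_insert_erase hnot x, Finset.erase_eq_of_notMem hσ]
  have hA2'sub : A2' ⊆ realized L := by
    rintro τ ⟨σ, ⟨⟨x, hx, rfl⟩, _⟩, rfl⟩
    exact ⟨x, compl_mono_insert hx, (sgnv_insert_erase hnot x).symm⟩
  -- the intersection consists of sign vectors realized on the line ℓ
  have hcut : A1 ∩ A2' ⊆ sgnv L '' (ℓ ∩ (bigU L)ᶜ) := by
    rintro τ ⟨⟨⟨x, hx, rfl⟩, hτx⟩, σ, ⟨⟨y, hy, rfl⟩, hτy⟩, hery⟩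
    have hery' : (sgnv (insert ℓ L) y).erase ℓ = sgnv (insert ℓ L) x := hery
    -- x has lf ℓ x < 0, y has lf ℓ y > 0, both with L-sign vector τ
    have hLx := compl_mono_insert hx
    have hLy := compl_mono_insert hy
    have hins : ∀ m ∈ insert ℓ L, IsAffLine m := by
      intro m hm
      rcases Finset.mem_insert.mp hm with rfl | hm
      · exact hℓ
      · exact hL m hm
    have hxne : lf ℓ x ≠ 0 := (mem_compl_bigU hins).mp hx ℓ (Finset.mem_insert_self _ _)
    have hyne : lf ℓ y ≠ 0 := (mem_compl_bigU hins).mp hy ℓ (Finset.mem_insert_self _ _)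
    have hxneg : lf ℓ x < 0 := by
      rcases lt_or_gt_of_ne hxne with h | h
      · exact h
      · exact absurd (mem_sgnv.mpr ⟨Finset.mem_insert_self _ _, h⟩) hτx
    have hypos : 0 < lf ℓ y := (mem_sgnv.mp hτy).2
    have hτx' : sgnv L x = sgnv (insert ℓ L) x := by
      rw [← sgnv_insert_erase hnot x, Finset.erase_eq_of_notMem hτx]
    have hτy' : sgnv L y = (sgnv (insert ℓ L) y).erase ℓ := (sgnv_insert_erase hnot y).symm
    have hsame : sgnv L x = sgnv L y := by
      rw [hτx', hτy', hery']
    -- the convex combination hitting ℓ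
    set t0 : ℝ := lf ℓ y / (lf ℓ y - lf ℓ x) with ht0
    have hden : 0 < lf ℓ y - lf ℓ x := by linarith
    have ht0pos : 0 < t0 := div_pos hypos hden
    have ht0lt : t0 < 1 := (div_lt_one hden).mpr (by linarith)
    set z : ℝ × ℝ := (1 - t0) • y + t0 • x with hz
    have hcombo : ∀ m, lf m z = (1 - t0) * lf m y + t0 * lf m x :=
      fun m => lf_combo m (by ring) y x
    have hzℓ : lf ℓ z = 0 := by
      rw [hcombo, ht0]
      have hd0 : lf ℓ y - lf ℓ x ≠ 0 := ne_of_gt hden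
      field_simp
      ring
    have hsign : ∀ m ∈ L, (0 < lf m z ↔ 0 < lf m y) ∧ lf m z ≠ 0 := by
      intro m hm
      have hmy := (mem_compl_bigU hL).mp hLy m hm
      have hmx := (mem_compl_bigU hL).mp hLx m hm
      have hiff : (0 < lf m x) ↔ (0 < lf m y) := by
        constructor
        · intro h; exact (mem_sgnv.mp (hsame ▸ mem_sgnv.mpr ⟨hm, h⟩)).2
        · intro h; exact (mem_sgnv.mp (hsame.symm ▸ mem_sgnv.mpr ⟨hm, h⟩)).2
      rcases lt_or_gt_of_ne hmy with hneg | hpos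
      · have hxneg' : lf m x < 0 := by
          rcases lt_or_gt_of_ne hmx with h | h
          · exact h
          · exact absurd (hiff.mp h) (by linarith)
        have : lf m z < 0 := by
          rw [hcombo]
          exact combo_neg (by linarith) (le_of_lt ht0pos) (by ring) hneg hxneg'
        exact ⟨by constructor <;> intro <;> linarith, ne_of_lt this⟩
      · have hxpos' : 0 < lf m x := by
          rcases lt_or_gt_of_ne hmx with h | h
          · exact absurd hpos (by intro hc; have := hiff.mpr hc; linarith)
          · exact h
        have : 0 < lf m z := by
          rw [hcombo]
          exact combo_pos (by linarith) (le_of_lt ht0pos) (by ring) hpos hxpos'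
        exact ⟨by constructor <;> intro <;> linarith, ne_of_gt this⟩
    have hzc : z ∈ (bigU L)ᶜ := (mem_compl_bigU hL).mpr fun m hm => (hsign m hm).2
    have hzℓ' : z ∈ ℓ := by rw [line_eq_zero ℓ hℓ]; exact hzℓ
    refine ⟨z, ⟨hzℓ', hzc⟩, ?_⟩
    -- sgnv L z = sgnv L x (= τ as it appears)
    have : sgnv L z = sgnv L y := by
      apply Finset.ext
      intro m
      rw [mem_sgnv, mem_sgnv]
      constructor
      · rintro ⟨hm, h⟩; exact ⟨hm, ((hsign m hm).1).mp h⟩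
      · rintro ⟨hm, h⟩; exact ⟨hm, ((hsign m hm).1).mpr h⟩
    rw [this, hτy', hery']
  -- cardinal bookkeeping
  have hcross := cross_card_le ℓ L hℓ hL hnot
  have hrealfin := realized_finite L
  have hA1' : A1.ncard + A2'.ncard
      = (A1 ∪ A2').ncard + (A1 ∩ A2').ncard :=
    (Set.ncard_union_add_ncard_inter A1 A2' hA1fin (hA2fin.image _)).symm
  have hsplit : A = A1 ∪ A2 := by
    ext σ
    constructor
    · intro h
      by_cases hc : ℓ ∈ σ
      · exact Or.inr ⟨h, hc⟩
      · exact Or.inl ⟨h, hc⟩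
    · rintro (⟨h, -⟩ | ⟨h, -⟩) <;> exact h
  calc A.ncard ≤ A1.ncard + A2.ncard := by
        rw [hsplit]; exact Set.ncard_union_le A1 A2
    _ = A1.ncard + A2'.ncard := by rw [hA2', Set.ncard_image_of_injOn hinj]
    _ = (A1 ∪ A2').ncard + (A1 ∩ A2').ncard := hA1'
    _ ≤ (realized L).ncard + (L.card + 1) :=
        Nat.add_le_add (Set.ncard_le_ncard (Set.union_subset hA1sub hA2'sub) hrealfin)
          (le_trans (Set.ncard_le_ncard hcut hcross.1) hcross.2)
/-- The set of connected components (regions) of the complement of a union of sets. -/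
def arrangementRegions (L : Finset (Set (ℝ × ℝ))) : Set (Set (ℝ × ℝ)) :=
  {c | ∃ x ∈ (⋃ ℓ ∈ L, ℓ)ᶜ, c = connectedComponentIn (⋃ ℓ ∈ L, ℓ)ᶜ x}

lemma realized_card : ∀ (L : Finset (Set (ℝ × ℝ))), (∀ m ∈ L, IsAffLine m) →
    (realized L).ncard ≤ 1 + L.card + L.card.choose 2 := by
  intro L
  induction L using Finset.induction_on with
  | empty =>
    intro _
    have hsub : realized ∅ ⊆ {∅} := by
      rintro v ⟨x, -, rfl⟩
      simp [sgnv]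
    calc (realized ∅).ncard ≤ ({∅} : Set (Finset (Set (ℝ × ℝ)))).ncard :=
          Set.ncard_le_ncard hsub (Set.finite_singleton _)
      _ = 1 := Set.ncard_singleton _
      _ ≤ _ := by simp
  | @insert ℓ s hnot ih =>
    intro hins
    have hs : ∀ m ∈ s, IsAffLine m := fun m hm => hins m (Finset.mem_insert_of_mem hm)
    have hℓ : IsAffLine ℓ := hins ℓ (Finset.mem_insert_self _ _)
    have hstep := realized_step ℓ s hℓ hs hnot
    have h2 := ih hs
    rw [Finset.card_insert_of_notMem hnot]
    have hch : (s.card + 1).choose 2 = s.card.choose 1 + s.card.choose 2 :=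
      Nat.choose_succ_succ s.card 1
    rw [Nat.choose_one_right] at hch
    omega

lemma regions_le (L : Finset (Set (ℝ × ℝ))) (hL : ∀ m ∈ L, IsAffLine m) :
    (arrangementRegions L).Finite ∧
      (arrangementRegions L).ncard ≤ (realized L).ncard := by
  classical
  set g : Set (ℝ × ℝ) → Finset (Set (ℝ × ℝ)) :=
    fun c => if h : c ∈ arrangementRegions L then sgnv L h.choose else ∅ with hg
  have himg : g '' (arrangementRegions L) ⊆ realized L := by
    rintro v ⟨c, hc, rfl⟩
    have hcv : g c = sgnv L hc.choose := by rw [hg]; simp only [dif_pos hc]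
    rw [hcv]
    exact ⟨hc.choose, hc.choose_spec.1, rfl⟩
  have hinj : Set.InjOn g (arrangementRegions L) := by
    intro c hc d hd hgc
    have hcv : g c = sgnv L hc.choose := by rw [hg]; simp only [dif_pos hc]
    have hdv : g d = sgnv L hd.choose := by rw [hg]; simp only [dif_pos hd]
    rw [hcv, hdv] at hgc
    obtain ⟨hx, hcx⟩ := hc.choose_spec
    obtain ⟨hy, hdy⟩ := hd.choose_spec
    set x := hc.choose
    set y := hd.choose
    have hx' : x ∈ (bigU L)ᶜ := hx
    have hy' : y ∈ (bigU L)ᶜ := hy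
    set K : Set (ℝ × ℝ) := {z | ∀ m ∈ L, lf m z ≠ 0 ∧ (0 < lf m z ↔ 0 < lf m x)} with hK
    have hxK : x ∈ K := fun m hm => ⟨(mem_compl_bigU hL).mp hx' m hm, Iff.rfl⟩
    have hyK : y ∈ K := by
      intro m hm
      refine ⟨(mem_compl_bigU hL).mp hy' m hm, ?_⟩
      constructor
      · intro h
        exact (mem_sgnv.mp (hgc ▸ mem_sgnv.mpr ⟨hm, h⟩)).2
      · intro h
        exact (mem_sgnv.mp (hgc.symm ▸ mem_sgnv.mpr ⟨hm, h⟩)).2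
    have hKU : K ⊆ (bigU L)ᶜ :=
      fun z hz => (mem_compl_bigU hL).mpr fun m hm => (hz m hm).1
    have hconv : Convex ℝ K := by
      intro z hz w hw s t hs ht hst
      intro m hm
      obtain ⟨h1, h1'⟩ := hz m hm
      obtain ⟨h2, h2'⟩ := hw m hm
      have hc' : lf m (s • z + t • w) = s * lf m z + t * lf m w := lf_combo m hst z w
      by_cases hpos : 0 < lf m x
      · have hzp : 0 < lf m z := h1'.mpr hpos
        have hwp : 0 < lf m w := h2'.mpr hpos
        have : 0 < lf m (s • z + t • w) := by
          rw [hc']; exact combo_pos hs ht hst hzp hwp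
        exact ⟨ne_of_gt this, iff_of_true this hpos⟩
      · have hzn : lf m z < 0 := by
          rcases lt_or_gt_of_ne h1 with h | h
          · exact h
          · exact absurd (h1'.mp h) hpos
        have hwn : lf m w < 0 := by
          rcases lt_or_gt_of_ne h2 with h | h
          · exact h
          · exact absurd (h2'.mp h) hpos
        have : lf m (s • z + t • w) < 0 := by
          rw [hc']; exact combo_neg hs ht hst hzn hwn
        exact ⟨ne_of_lt this, iff_of_false (by linarith) hpos⟩
    have hyc : y ∈ connectedComponentIn (bigU L)ᶜ x :=
      hconv.isPreconnected.subset_connectedComponentIn hxK hKU hyK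
    have := connectedComponentIn_eq hyc
    rw [hcx, hdy]
    exact this
  have hfin : (arrangementRegions L).Finite :=
    Set.Finite.of_finite_image ((realized_finite L).subset himg) hinj
  exact ⟨hfin, by
    rw [← Set.ncard_image_of_injOn hinj]
    exact Set.ncard_le_ncard himg (realized_finite L)⟩

/-- A finite set of `n` distinct lines in `ℝ²` divides the plane into at most
`1 + n + n(n−1)/2` regions; in particular, for `n ≥ 2`, into at most `n²` regions. -/
theorem stmt14 (n : ℕ) (L : Finset (Set (ℝ × ℝ))) (hcard : L.card = n)
    (hlines : ∀ ℓ ∈ L, ∃ α β γ : ℝ, (α, β) ≠ (0, 0) ∧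
      ℓ = {q : ℝ × ℝ | α * q.1 + β * q.2 = γ}) :
    ((arrangementRegions L).Finite ∧
      (arrangementRegions L).ncard ≤ 1 + n + n * (n - 1) / 2) ∧
    (2 ≤ n → (arrangementRegions L).ncard ≤ n ^ 2) := by
  subst hcard
  have hIs : ∀ ℓ ∈ L, IsAffLine ℓ := hlines
  obtain ⟨hfin, hle⟩ := regions_le L hIs
  have hr := realized_card L hIs
  have hb : (arrangementRegions L).ncard ≤ 1 + L.card + L.card.choose 2 := le_trans hle hr
  rw [Nat.choose_two_right] at hb
  refine ⟨⟨hfin, hb⟩, fun hn => ?_⟩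
  refine le_trans hb ?_
  obtain ⟨m, hk⟩ : ∃ m, L.card = m + 2 := ⟨L.card - 2, by omega⟩
  rw [hk]
  have hev : 2 ∣ (m + 2) * (m + 2 - 1) := by
    rcases Nat.even_or_odd m with h | h
    · obtain ⟨j, hj⟩ := h
      exact Dvd.dvd.mul_right ⟨j + 1, by omega⟩ _
    · obtain ⟨j, hj⟩ := h
      exact Dvd.dvd.mul_left ⟨j + 1, by omega⟩ _
  have hj : (m + 2) * (m + 2 - 1) / 2 * 2 = (m + 2) * (m + 2 - 1) :=
    Nat.div_mul_cancel hev
  have hm1 : m + 2 - 1 = m + 1 := by omega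
  rw [hm1] at hj ⊢
  nlinarith [hj]
end

section
/- Let b ≥ 1 and let W = ⌊X⌋ where X is a random variable with the Laplace density f_b. Then for every integer w, P[W = w − 1] ≤ e^{1/b} · P[W = w]; equivalently, ∫_{[w−1, w)} f_b(x) dx ≤ e^{1/b} · ∫_{[w, w+1)} f_b(x) dx. -/
/- Shifting the argument of the Laplace density by `t` changes it by a factor of at most
`e^{|t|/b}` (triangle inequality in the exponent); integrating this pointwise bound over the
shifted cell `[w - 1, w)` gives the theorem. -/

open MeasureTheory

theorem continuous_lapDensity (b : ℝ) : Continuous (lapDensity b) := by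
  unfold lapDensity
  fun_prop

theorem lapDensity_sub_le {b : ℝ} (hb : 0 < b) (x t : ℝ) :
    lapDensity b (x - t) ≤ Real.exp (|t| / b) * lapDensity b x := by
  have hexp : Real.exp (-|x - t| / b) ≤ Real.exp (|t| / b) * Real.exp (-|x| / b) := by
    rw [← Real.exp_add, Real.exp_le_exp, ← add_div]
    gcongr
    have := abs_sub_abs_le_abs_sub x (x - t)
    rw [sub_sub_cancel] at this
    linarith
  calc lapDensity b (x - t) ≤ 1 / (2 * b) * (Real.exp (|t| / b) * Real.exp (-|x| / b)) := by
        unfold lapDensity; gcongr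
    _ = Real.exp (|t| / b) * lapDensity b x := by unfold lapDensity; ring

theorem setIntegral_Ico_lapDensity_sub_le {b : ℝ} (hb : 0 < b) {a c : ℝ} (hac : a ≤ c) (t : ℝ) :
    ∫ x in Set.Ico (a - t) (c - t), lapDensity b x ≤
      Real.exp (|t| / b) * ∫ x in Set.Ico a c, lapDensity b x := by
  rw [integral_Ico_eq_integral_Ioc, integral_Ico_eq_integral_Ioc,
    ← intervalIntegral.integral_of_le hac, ← intervalIntegral.integral_of_le (by linarith),
    ← intervalIntegral.integral_comp_sub_right, ← intervalIntegral.integral_const_mul]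
  have hf := continuous_lapDensity b
  refine intervalIntegral.integral_mono_on hac ?_ ?_ fun x _ => lapDensity_sub_le hb x t
  · exact (hf.comp (continuous_sub_right t)).intervalIntegrable _ _
  · exact (continuous_const.mul hf).intervalIntegrable _ _

/-- Floored Laplace noise `W = ⌊Lap(b)⌋` with `b ≥ 1` satisfies
`P[W = w − 1] ≤ e^{1/b} · P[W = w]` for every integer `w`; since `W = w` exactly when the
Laplace sample lies in `[w, w+1)`, this reads
`∫_{[w−1, w)} f_b ≤ e^{1/b} · ∫_{[w, w+1)} f_b`. -/
theorem stmt17 (b : ℝ) (hb : 1 ≤ b) (w : ℤ) :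
    ∫ x in Set.Ico ((w : ℝ) - 1) (w : ℝ), lapDensity b x ≤
      Real.exp (1 / b) * ∫ x in Set.Ico (w : ℝ) ((w : ℝ) + 1), lapDensity b x := by
  simpa using setIntegral_Ico_lapDensity_sub_le (b := b) (by linarith)
    (show (w : ℝ) ≤ w + 1 by linarith) 1
end
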